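/- arXiv:1308.2170 — 2 statements merged into one kernel-verified Lean document; each statement's English description precedes it below -/
import Mathlib

section
/- Let e ≥ 2, r = 3, fix a partition {0,…,e−1} = X ⊔ Y ⊔ Z with |Y| = y+1 ≥ 1 and |Z| = z+1 ≥ 1, and fix u ∈ {1,…,6}. Then D^u is a single equivalence class under the bead-swap relation ∼: for every M ∈ D^u one has {L ∈ M(3,e) : L ∼ M} = D^u. -/
open scoped Classical

namespace AK
noncomputable section



/-! ### Matrices, order from base tuple, abacus β-sets -/

/-- The order ≺ on columns determined by a base tuple `B`. -/
def prec {e : ℕ} (B : Fin e → ℕ) (i j : Fin e) : Prop :=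
  B i < B j ∨ (B i = B j ∧ i < j)

/-- `rank B i = π(B)⁻¹(i)`, the number of columns ≺-smaller than `i`. -/
def rank {e : ℕ} (B : Fin e → ℕ) (i : Fin e) : Fin e :=
  ⟨(Finset.univ.filter (fun j => prec B j i)).card, by
    have h1 : (Finset.univ.filter (fun j => prec B j i)) ⊆ Finset.univ.erase i := by
      intro j hj
      rw [Finset.mem_filter] at hj
      refine Finset.mem_erase.mpr ⟨?_, Finset.mem_univ j⟩
      rintro rfl
      rcases hj.2 with h | ⟨-, h⟩ <;> exact lt_irrefl _ h
    have h2 := Finset.card_le_card h1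
    have h3 : (Finset.univ.erase i).card < Finset.univ.card :=
      Finset.card_erase_lt_of_mem (Finset.mem_univ i)
    simpa using lt_of_le_of_lt h2 h3⟩

/-- The number of beads on runner `i` of the abacus of component `s` of `Pt(B,M)`. -/
def beads {e r : ℕ} (B : Fin e → ℕ) (M : Fin r → Fin e → Bool) (s : Fin r) (i : Fin e) : ℕ :=
  B i + (if M s (rank B i) then 1 else 0)

/-- The canonical β-set of component `s` of `Pt(B,M)`. -/
def Tset {e r : ℕ} (B : Fin e → ℕ) (M : Fin r → Fin e → Bool) (s : Fin r) : Set ℤ :=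
  {z | z < 0 ∨ (0 ≤ z ∧ ∃ h : z.toNat % e < e, z.toNat / e < beads B M s ⟨z.toNat % e, h⟩)}

/-- `n_s`, the total number of beads of component `s`. -/
def nsum {e r : ℕ} (B : Fin e → ℕ) (M : Fin r → Fin e → Bool) (s : Fin r) : ℕ :=
  ∑ i : Fin e, beads B M s i

/-- Decreasing enumeration of a set of integers: `tEnum T x` is `t_{x+1}`. -/
noncomputable def tEnum (T : Set ℤ) : ℕ → ℤ
  | 0 => sSup T
  | (x + 1) => sSup (T ∩ Set.Iio (tEnum T x))

/-- The multipartition `Pt(B,M)`: component `s`, part `p+1` (0-indexed parts). -/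
noncomputable def PtPart {e r : ℕ} (B : Fin e → ℕ) (M : Fin r → Fin e → Bool)
    (s : Fin r) (p : ℕ) : ℕ :=
  (tEnum (Tset B M s) p + (p + 1) - (nsum B M s : ℤ)).toNat

/-- The multicharge of `Pt(B,M)`. -/
noncomputable def PtCharge {e r : ℕ} (B : Fin e → ℕ) (M : Fin r → Fin e → Bool)
    (s : Fin r) : ZMod e :=
  (nsum B M s : ZMod e)

/-! ### Nodes, good nodes and Kleshchev multipartitions -/

/-- A node `(s, x, y)` (all 0-indexed). -/
abbrev Node (r : ℕ) := Fin r × ℕ × ℕ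

/-- `A` is above `B`. -/
def NodeAbove {r : ℕ} (A B : Node r) : Prop :=
  A.1 < B.1 ∨ (A.1 = B.1 ∧ A.2.1 < B.2.1)

/-- The residue of a node. -/
def res {e r : ℕ} (a : Fin r → ZMod e) (A : Node r) : ZMod e :=
  a A.1 - (A.2.1 : ZMod e) + (A.2.2 : ZMod e)

/-- `A` is a removable node of `lam`. -/
def Removable {r : ℕ} (lam : Fin r → ℕ → ℕ) (A : Node r) : Prop :=
  A.2.2 + 1 = lam A.1 A.2.1 ∧ lam A.1 (A.2.1 + 1) < lam A.1 A.2.1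

/-- `A` is an addable node of `lam`. -/
def Addable {r : ℕ} (lam : Fin r → ℕ → ℕ) (A : Node r) : Prop :=
  A.2.2 = lam A.1 A.2.1 ∧ (A.2.1 = 0 ∨ lam A.1 A.2.1 < lam A.1 (A.2.1 - 1))

/-- `A` is a normal node of `lam`. -/
def Normal {e r : ℕ} (a : Fin r → ZMod e) (lam : Fin r → ℕ → ℕ) (A : Node r) : Prop :=
  Removable lam A ∧
    ∀ B : Node r, Addable lam B → res a B = res a A → NodeAbove A B →
      Set.ncard {C : Node r | Addable lam C ∧ res a C = res a A ∧ NodeAbove A C ∧ NodeAbove C B}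
        < Set.ncard {C : Node r | Removable lam C ∧ res a C = res a A ∧ NodeAbove A C ∧ NodeAbove C B}

/-- `A` is a good node of `lam`: normal, and highest among normal nodes of its residue. -/
def Good {e r : ℕ} (a : Fin r → ZMod e) (lam : Fin r → ℕ → ℕ) (A : Node r) : Prop :=
  Normal a lam A ∧ ∀ B : Node r, Normal a lam B → res a B = res a A → B ≠ A → NodeAbove A B

/-- Remove the node `A` from `lam`. -/
def removeNode {r : ℕ} (lam : Fin r → ℕ → ℕ) (A : Node r) : Fin r → ℕ → ℕ :=
  fun s x => if s = A.1 ∧ x = A.2.1 then lam s x - 1 else lam s x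

/-- Kleshchev multipartitions (for the multicharge `a`). -/
inductive IsKleshchev {e r : ℕ} (a : Fin r → ZMod e) : (Fin r → ℕ → ℕ) → Prop
  | empty : IsKleshchev a (fun _ _ => 0)
  | step (lam : Fin r → ℕ → ℕ) (A : Node r) (hA : Good a lam A)
      (h : IsKleshchev a (removeNode lam A)) : IsKleshchev a lam

/-! ### Weights and bead swaps -/

/-- `δ₊^M(t,s)`. -/
def deltaP {e r : ℕ} (M : Fin r → Fin e → Bool) (t s : Fin r) : ℕ :=
  (Finset.univ.filter (fun i => M t i = true ∧ M s i = false)).card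

/-- `wt^M(t,s)`. -/
def wtPair {e r : ℕ} (M : Fin r → Fin e → Bool) (t s : Fin r) : ℕ :=
  min (deltaP M t s) (deltaP M s t)

/-- `wt(M)`. -/
def wtM {e r : ℕ} (M : Fin r → Fin e → Bool) : ℕ :=
  ∑ t : Fin r, ∑ s ∈ Finset.univ.filter (· < t), wtPair M t s

/-- `M'` is obtained from `M` by a bead swap. -/
def BeadSwap {e r : ℕ} (M M' : Fin r → Fin e → Bool) : Prop :=
  ∃ i j : Fin e, i ≠ j ∧ ∃ s t : Fin r, s ≠ t ∧
    M s i = true ∧ M t j = true ∧ M s j = false ∧ M t i = false ∧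
    M' s i = false ∧ M' t j = false ∧ M' s j = true ∧ M' t i = true ∧
    (∀ s' i', (s' ≠ s ∧ s' ≠ t) ∨ (i' ≠ i ∧ i' ≠ j) → M' s' i' = M s' i')




/-! ### The families `α^u_k`, `β^u_l`, `γ^u_{kl}` for `r = 3` -/

def xcol : Fin 6 → Fin 3 → Bool := fun _ => ![false, false, false]

def ycol : Fin 6 → Fin 3 → Bool :=
  ![![false,true,true], ![true,false,false], ![true,true,false],
    ![false,false,true], ![false,true,true], ![true,false,false]]

def zcol : Fin 6 → Fin 3 → Bool :=
  ![![false,false,true], ![true,false,true], ![false,true,false],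
    ![true,false,true], ![false,true,false], ![true,true,false]]

def oycol : Fin 6 → Fin 3 → Bool :=
  ![![true,false,true], ![false,false,true], ![false,true,true],
    ![true,false,false], ![true,true,false], ![false,true,false]]

def ozcol : Fin 6 → Fin 3 → Bool :=
  ![![false,true,false], ![true,true,false], ![true,false,false],
    ![false,true,true], ![false,false,true], ![true,false,true]]

def aacol : Fin 6 → Fin 3 → Bool :=
  ![![true,true,false], ![false,true,false], ![true,false,true],
    ![false,true,false], ![true,false,true], ![false,false,true]]

def abcol : Fin 6 → Fin 3 → Bool :=
  ![![true,false,false], ![false,true,true], ![false,false,true],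
    ![true,true,false], ![true,false,false], ![false,true,true]]

variable {e : ℕ}

/-- The matrix `α^u_k`. -/
def alphaM (Y Z : Finset (Fin e)) {y : ℕ} (hY : Y.card = y + 1) (u : Fin 6)
    (k : Fin (y + 1)) : Fin 3 → Fin e → Bool :=
  fun s c =>
    if c = Y.orderEmbOfFin hY k then aacol u s
    else if c ∈ Y then ycol u s
    else if c ∈ Z then zcol u s
    else false

/-- The matrix `β^u_l`. -/
def betaM (Y Z : Finset (Fin e)) {z : ℕ} (hZ : Z.card = z + 1) (u : Fin 6)
    (l : Fin (z + 1)) : Fin 3 → Fin e → Bool :=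
  fun s c =>
    if c = Z.orderEmbOfFin hZ l then abcol u s
    else if c ∈ Z then zcol u s
    else if c ∈ Y then ycol u s
    else false

/-- The matrix `γ^u_{kl}`. -/
def gammaM (Y Z : Finset (Fin e)) {y z : ℕ} (hY : Y.card = y + 1) (hZ : Z.card = z + 1)
    (u : Fin 6) (k : Fin (y + 1)) (l : Fin (z + 1)) : Fin 3 → Fin e → Bool :=
  fun s c =>
    if c = Y.orderEmbOfFin hY k then oycol u s
    else if c = Z.orderEmbOfFin hZ l then ozcol u s
    else if c ∈ Y then ycol u s
    else if c ∈ Z then zcol u s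
    else false

/-- The set `D^u` of matrices in the block. -/
def Duset (Y Z : Finset (Fin e)) {y z : ℕ} (hY : Y.card = y + 1) (hZ : Z.card = z + 1)
    (u : Fin 6) : Set (Fin 3 → Fin e → Bool) :=
  {A | (∃ k, A = alphaM Y Z hY u k) ∨ (∃ l, A = betaM Y Z hZ u l) ∨
       (∃ k l, A = gammaM Y Z hY hZ u k l)}

/-!
Bead swaps preserve all row and column sums, and these margins already cut out `D^u`. Column by
column, a matrix of `D^u` is the base pattern (`y(u)` on `Y`, `z(u)` on `Z`, `x(u)` elsewhere)
changed in one column of `Y` to `aα(u)`, in one column of `Z` to `aβ(u)`, or in one column of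
each to `oy(u)` and `oz(u)`. The column sums force each column of `Y` to be one of the three
vectors `y(u), oy(u), aα(u)` of its weight, each column of `Z` one of `z(u), oz(u), aβ(u)`, and
the others to vanish; the row sums then admit only the three kinds of change above. Conversely,
single bead swaps join `α_k` and `β_l` to `γ_{kl}`, and `γ_{kl}` to `γ_{k'l}` and `γ_{kl'}`.
-/

open Function

section BeadSwap

variable {e r : ℕ}

def weight (v : Fin r → Bool) : ℕ := ∑ s, (v s).toNat

def defect (v w : Fin r → Bool) (s : Fin r) : ℤ := (v s).toNat - (w s).toNat

theorem Fintype.sum_eq_sum_of_eqOn_compl_pair {ι M : Type*} [Fintype ι] [DecidableEq ι]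
    [AddCommMonoid M] {f g : ι → M} {i j : ι} (hij : i ≠ j) (hpair : f i + f j = g i + g j)
    (hrest : ∀ k, k ≠ i → k ≠ j → f k = g k) : ∑ k, f k = ∑ k, g k := by
  have hj : j ∈ Finset.univ.erase i := Finset.mem_erase.2 ⟨hij.symm, Finset.mem_univ j⟩
  have split (h : ι → M) : ∑ k, h k = h i + h j + ∑ k ∈ (Finset.univ.erase i).erase j, h k := by
    rw [← Finset.add_sum_erase _ h (Finset.mem_univ i), ← Finset.add_sum_erase _ h hj, add_assoc]
  rw [split f, split g, hpair]
  refine congrArg _ (Finset.sum_congr rfl fun k hk => ?_)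
  simp only [Finset.mem_erase] at hk
  exact hrest k hk.2.1 hk.1

theorem BeadSwap.transpose {M M' : Fin r → Fin e → Bool} (h : BeadSwap M M') :
    BeadSwap (swap M) (swap M') := by
  obtain ⟨i, j, hij, s, t, hst, h1, h2, h3, h4, h5, h6, h7, h8, hoff⟩ := h
  exact ⟨s, t, hst, i, j, hij, h1, h2, h4, h3, h5, h6, h8, h7,
    fun c k hck => hoff k c hck.symm⟩

theorem BeadSwap.weight_row_eq {M M' : Fin r → Fin e → Bool} (h : BeadSwap M M') (k : Fin r) :
    weight (M' k) = weight (M k) := by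
  obtain ⟨i, j, hij, s, t, hst, h1, h2, h3, h4, h5, h6, h7, h8, hoff⟩ := h
  refine Fintype.sum_eq_sum_of_eqOn_compl_pair hij ?_ fun c hci hcj => by
    rw [hoff k c (Or.inr ⟨hci, hcj⟩)]
  by_cases hks : k = s
  · subst hks; simp [h1, h3, h5, h7]
  by_cases hkt : k = t
  · subst hkt; simp [h2, h4, h6, h8]
  · rw [hoff k i (Or.inl ⟨hks, hkt⟩), hoff k j (Or.inl ⟨hks, hkt⟩)]

theorem BeadSwap.weight_col_eq {M M' : Fin r → Fin e → Bool} (h : BeadSwap M M') (c : Fin e) :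
    weight (swap M' c) = weight (swap M c) :=
  h.transpose.weight_row_eq c

theorem Relation.EqvGen.apply_eq_of_invariant {α β : Type*} {R : α → α → Prop} {f : α → β}
    (hf : ∀ a b, R a b → f a = f b) {a b : α} (h : Relation.EqvGen R a b) : f a = f b :=
  (InvImage.equivalence (· = ·) f eq_equivalence).eqvGen_iff.1
    (h.mono (p := InvImage (· = ·) f) hf)

theorem weight_row_eq_of_eqvGen {M M' : Fin r → Fin e → Bool}
    (h : Relation.EqvGen BeadSwap M M') (k : Fin r) : weight (M k) = weight (M' k) :=
  Relation.EqvGen.apply_eq_of_invariant (f := fun N => weight (N k))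
    (fun _ _ hab => (hab.weight_row_eq k).symm) h

theorem weight_col_eq_of_eqvGen {M M' : Fin r → Fin e → Bool}
    (h : Relation.EqvGen BeadSwap M M') (c : Fin e) : weight (swap M c) = weight (swap M' c) :=
  Relation.EqvGen.apply_eq_of_invariant (f := fun N => weight (swap N c))
    (fun _ _ hab => (hab.weight_col_eq c).symm) h

theorem weight_swap_update (F : Fin e → Fin r → Bool) (w : Fin e) (v : Fin r → Bool)
    (s : Fin r) : (weight (swap (update F w v) s) : ℤ) = weight (swap F s) + defect v (F w) s := by
  simp only [weight, defect, swap, Nat.cast_sum]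
  rw [← Finset.add_sum_erase _ _ (Finset.mem_univ w),
    ← Finset.add_sum_erase _ _ (Finset.mem_univ w),
    Finset.sum_congr rfl fun c hc => by rw [update_of_ne (Finset.ne_of_mem_erase hc)]]
  simp only [update_self]
  ring

theorem weight_update_apply {F : Fin e → Fin r → Bool} {w : Fin e} {v : Fin r → Bool}
    (hv : weight v = weight (F w)) (c : Fin e) : weight (update F w v c) = weight (F c) := by
  by_cases hc : c = w
  · subst hc; rw [update_self, hv]
  · rw [update_of_ne hc]

def IsColumnSwap (v w v' w' : Fin r → Bool) : Prop :=
  ∃ s t, s ≠ t ∧ v s = true ∧ w t = true ∧ w s = false ∧ v t = false ∧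
    v' = update (update v s false) t true ∧ w' = update (update w s true) t false

theorem beadSwap_swap_update {F : Fin e → Fin r → Bool} {i j : Fin e} (hij : i ≠ j)
    {v' w' : Fin r → Bool} (h : IsColumnSwap (F i) (F j) v' w') :
    BeadSwap (swap F) (swap (update (update F i v') j w')) := by
  obtain ⟨s, t, hst, h1, h2, h3, h4, rfl, rfl⟩ := h
  refine ⟨i, j, hij, s, t, hst, h1, h2, h3, h4, ?_⟩
  simp only [swap, update_self, update_of_ne hij, update_of_ne hst, true_and]
  rintro s' c (⟨hs, ht⟩ | ⟨hi, hj⟩)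
  · simp only [update_apply]
    split_ifs <;> simp_all
  · rw [update_of_ne hj, update_of_ne hi]

end BeadSwap

section Patterns

theorem xcol_apply (u : Fin 6) (s : Fin 3) : xcol u s = false := by
  revert u s; decide

theorem eq_xcol_of_weight_eq (u : Fin 6) (v : Fin 3 → Bool) (h : weight v = weight (xcol u)) :
    v = xcol u := by
  revert u v; decide

theorem eq_of_weight_eq_ycol (u : Fin 6) (v : Fin 3 → Bool) (h : weight v = weight (ycol u)) :
    v = ycol u ∨ v = oycol u ∨ v = aacol u := by
  revert u v; decide

theorem eq_of_weight_eq_zcol (u : Fin 6) (v : Fin 3 → Bool) (h : weight v = weight (zcol u)) :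
    v = zcol u ∨ v = ozcol u ∨ v = abcol u := by
  revert u v; decide

theorem weight_oycol_aacol (u : Fin 6) :
    weight (oycol u) = weight (ycol u) ∧ weight (aacol u) = weight (ycol u) := by
  revert u; decide

theorem weight_ozcol_abcol (u : Fin 6) :
    weight (ozcol u) = weight (zcol u) ∧ weight (abcol u) = weight (zcol u) := by
  revert u; decide

theorem ycol_oycol_aacol_ne (u : Fin 6) :
    ycol u ≠ oycol u ∧ ycol u ≠ aacol u ∧ oycol u ≠ aacol u := by
  revert u; decide

theorem zcol_ozcol_abcol_ne (u : Fin 6) :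
    zcol u ≠ ozcol u ∧ zcol u ≠ abcol u ∧ ozcol u ≠ abcol u := by
  revert u; decide

theorem defect_abcol_zcol (u : Fin 6) :
    defect (abcol u) (zcol u) = defect (aacol u) (ycol u) := by
  revert u; decide

theorem defect_oycol_add_defect_ozcol (u : Fin 6) (s : Fin 3) :
    defect (oycol u) (ycol u) s + defect (ozcol u) (zcol u) s = defect (aacol u) (ycol u) s := by
  revert u s; decide

theorem isColumnSwap_aacol_zcol (u : Fin 6) :
    IsColumnSwap (aacol u) (zcol u) (oycol u) (ozcol u) := by
  unfold IsColumnSwap; revert u; decide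

theorem isColumnSwap_ycol_abcol (u : Fin 6) :
    IsColumnSwap (ycol u) (abcol u) (oycol u) (ozcol u) := by
  unfold IsColumnSwap; revert u; decide

theorem isColumnSwap_oycol_ycol (u : Fin 6) :
    IsColumnSwap (oycol u) (ycol u) (ycol u) (oycol u) := by
  unfold IsColumnSwap; revert u; decide

theorem isColumnSwap_ozcol_zcol (u : Fin 6) :
    IsColumnSwap (ozcol u) (zcol u) (zcol u) (ozcol u) := by
  unfold IsColumnSwap; revert u; decide

theorem defect_count (u : Fin 6) (a b c d : ℕ) (h : ∀ s, a * defect (oycol u) (ycol u) s +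
    b * defect (aacol u) (ycol u) s + c * defect (ozcol u) (zcol u) s +
    d * defect (abcol u) (zcol u) s = defect (aacol u) (ycol u) s) :
    (a = 0 ∧ b = 1 ∧ c = 0 ∧ d = 0) ∨ (a = 0 ∧ b = 0 ∧ c = 0 ∧ d = 1) ∨
      (a = 1 ∧ b = 0 ∧ c = 1 ∧ d = 0) := by
  have h0 := h 0
  have h1 := h 1
  have h2 := h 2
  fin_cases u <;> simp [defect, ycol, zcol, oycol, ozcol, aacol, abcol] at h0 h1 h2 <;> omega

end Patterns

section Block

variable {e : ℕ} (Y Z : Finset (Fin e)) (u : Fin 6)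

def baseCols (c : Fin e) : Fin 3 → Bool :=
  if c ∈ Y then ycol u else if c ∈ Z then zcol u else xcol u

def alphaCols (w : Fin e) : Fin e → Fin 3 → Bool := update (baseCols Y Z u) w (aacol u)

def betaCols (w : Fin e) : Fin e → Fin 3 → Bool := update (baseCols Y Z u) w (abcol u)

def gammaCols (w w' : Fin e) : Fin e → Fin 3 → Bool :=
  update (update (baseCols Y Z u) w (oycol u)) w' (ozcol u)

def DCols : Set (Fin e → Fin 3 → Bool) :=
  {F | (∃ w ∈ Y, F = alphaCols Y Z u w) ∨ (∃ w ∈ Z, F = betaCols Y Z u w) ∨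
    ∃ w ∈ Y, ∃ w' ∈ Z, F = gammaCols Y Z u w w'}

variable {Y Z u}

theorem baseCols_of_mem_left {c : Fin e} (hc : c ∈ Y) : baseCols Y Z u c = ycol u := if_pos hc

theorem baseCols_of_mem_right (hYZ : Disjoint Y Z) {c : Fin e} (hc : c ∈ Z) :
    baseCols Y Z u c = zcol u := by
  rw [baseCols, if_neg (Finset.disjoint_right.1 hYZ hc), if_pos hc]

theorem baseCols_of_not_mem {c : Fin e} (hcY : c ∉ Y) (hcZ : c ∉ Z) :
    baseCols Y Z u c = xcol u := by
  rw [baseCols, if_neg hcY, if_neg hcZ]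

theorem swap_alphaM {y : ℕ} (hY : Y.card = y + 1) (k : Fin (y + 1)) :
    swap (alphaM Y Z hY u k) = alphaCols Y Z u (Y.orderEmbOfFin hY k) := by
  funext c s
  simp only [swap, alphaM, alphaCols, baseCols, update_apply]
  split_ifs <;> simp [xcol_apply]

theorem swap_betaM (hYZ : Disjoint Y Z) {z : ℕ} (hZ : Z.card = z + 1) (l : Fin (z + 1)) :
    swap (betaM Y Z hZ u l) = betaCols Y Z u (Z.orderEmbOfFin hZ l) := by
  funext c s
  simp only [swap, betaM, betaCols, baseCols, update_apply]
  split_ifs <;> simp_all [xcol_apply, Finset.disjoint_left.1 hYZ]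

theorem swap_gammaM (hYZ : Disjoint Y Z) {y z : ℕ} (hY : Y.card = y + 1) (hZ : Z.card = z + 1)
    (k : Fin (y + 1)) (l : Fin (z + 1)) :
    swap (gammaM Y Z hY hZ u k l) =
      gammaCols Y Z u (Y.orderEmbOfFin hY k) (Z.orderEmbOfFin hZ l) := by
  funext c s
  have hne : Y.orderEmbOfFin hY k ≠ Z.orderEmbOfFin hZ l :=
    hYZ.forall_ne_finset (Y.orderEmbOfFin_mem hY k) (Z.orderEmbOfFin_mem hZ l)
  simp only [swap, gammaM, gammaCols, baseCols, update_apply]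
  split_ifs <;> simp_all [xcol_apply]

theorem mem_Duset_iff (hYZ : Disjoint Y Z) {y z : ℕ} (hY : Y.card = y + 1)
    (hZ : Z.card = z + 1) {L : Fin 3 → Fin e → Bool} :
    L ∈ Duset Y Z hY hZ u ↔ swap L ∈ DCols Y Z u := by
  have hYrange : Set.range (Y.orderEmbOfFin hY) = Y := Finset.range_orderEmbOfFin Y hY
  have hZrange : Set.range (Z.orderEmbOfFin hZ) = Z := Finset.range_orderEmbOfFin Z hZ
  constructor
  · rintro (⟨k, rfl⟩ | ⟨l, rfl⟩ | ⟨k, l, rfl⟩)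
    · exact Or.inl ⟨_, Y.orderEmbOfFin_mem hY k, swap_alphaM hY k⟩
    · exact Or.inr (Or.inl ⟨_, Z.orderEmbOfFin_mem hZ l, swap_betaM hYZ hZ l⟩)
    · exact Or.inr (Or.inr ⟨_, Y.orderEmbOfFin_mem hY k, _, Z.orderEmbOfFin_mem hZ l,
        swap_gammaM hYZ hY hZ k l⟩)
  · rintro (⟨w, hw, hL⟩ | ⟨w, hw, hL⟩ | ⟨w, hw, w', hw', hL⟩)
    · obtain ⟨k, rfl⟩ : w ∈ Set.range (Y.orderEmbOfFin hY) := hYrange ▸ hw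
      exact Or.inl ⟨k, congrArg swap (hL.trans (swap_alphaM hY k).symm)⟩
    · obtain ⟨l, rfl⟩ : w ∈ Set.range (Z.orderEmbOfFin hZ) := hZrange ▸ hw
      exact Or.inr (Or.inl ⟨l, congrArg swap (hL.trans (swap_betaM hYZ hZ l).symm)⟩)
    · obtain ⟨k, rfl⟩ : w ∈ Set.range (Y.orderEmbOfFin hY) := hYrange ▸ hw
      obtain ⟨l, rfl⟩ : w' ∈ Set.range (Z.orderEmbOfFin hZ) := hZrange ▸ hw'
      exact Or.inr (Or.inr ⟨k, l, congrArg swap (hL.trans (swap_gammaM hYZ hY hZ k l).symm)⟩)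

theorem weight_of_mem_DCols (hYZ : Disjoint Y Z) {F : Fin e → Fin 3 → Bool}
    (hF : F ∈ DCols Y Z u) (c : Fin e) : weight (F c) = weight (baseCols Y Z u c) := by
  rcases hF with ⟨w, hw, rfl⟩ | ⟨w, hw, rfl⟩ | ⟨w, hw, w', hw', rfl⟩
  · rw [alphaCols, weight_update_apply]
    rw [baseCols_of_mem_left hw, (weight_oycol_aacol u).2]
  · rw [betaCols, weight_update_apply]
    rw [baseCols_of_mem_right hYZ hw, (weight_ozcol_abcol u).2]
  · have hne : w' ≠ w := (hYZ.forall_ne_finset hw hw').symm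
    rw [gammaCols, weight_update_apply, weight_update_apply]
    · rw [baseCols_of_mem_left hw, (weight_oycol_aacol u).1]
    · rw [update_of_ne hne, baseCols_of_mem_right hYZ hw', (weight_ozcol_abcol u).1]

theorem weight_swap_of_mem_DCols (hYZ : Disjoint Y Z) {F : Fin e → Fin 3 → Bool}
    (hF : F ∈ DCols Y Z u) (s : Fin 3) :
    (weight (swap F s) : ℤ) = weight (swap (baseCols Y Z u) s) + defect (aacol u) (ycol u) s := by
  rcases hF with ⟨w, hw, rfl⟩ | ⟨w, hw, rfl⟩ | ⟨w, hw, w', hw', rfl⟩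
  · rw [alphaCols, weight_swap_update, baseCols_of_mem_left hw]
  · rw [betaCols, weight_swap_update, baseCols_of_mem_right hYZ hw, defect_abcol_zcol]
  · have hne : w' ≠ w := (hYZ.forall_ne_finset hw hw').symm
    rw [gammaCols, weight_swap_update, weight_swap_update, update_of_ne hne,
      baseCols_of_mem_left hw, baseCols_of_mem_right hYZ hw', add_assoc,
      defect_oycol_add_defect_ozcol]


end Block

section Characterization

open Finset

variable {e : ℕ} {Y Z : Finset (Fin e)} {u : Fin 6}

theorem eq_baseCols_or_of_weight_eq (hYZ : Disjoint Y Z) {F : Fin e → Fin 3 → Bool}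
    (hcol : ∀ c, weight (F c) = weight (baseCols Y Z u c)) (c : Fin e) :
    F c = baseCols Y Z u c ∨ (c ∈ Y ∧ F c = oycol u) ∨ (c ∈ Y ∧ F c = aacol u) ∨
      (c ∈ Z ∧ F c = ozcol u) ∨ (c ∈ Z ∧ F c = abcol u) := by
  have h := hcol c
  by_cases hcY : c ∈ Y
  · rw [baseCols_of_mem_left hcY] at h ⊢
    rcases eq_of_weight_eq_ycol u _ h with h | h | h <;> simp [h, hcY]
  by_cases hcZ : c ∈ Z
  · rw [baseCols_of_mem_right hYZ hcZ] at h ⊢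
    rcases eq_of_weight_eq_zcol u _ h with h | h | h <;> simp [h, hcZ]
  · rw [baseCols_of_not_mem hcY hcZ] at h ⊢
    exact Or.inl (eq_xcol_of_weight_eq u _ h)

theorem weight_swap_eq_of_weight_eq (hYZ : Disjoint Y Z) {F : Fin e → Fin 3 → Bool}
    (hcol : ∀ c, weight (F c) = weight (baseCols Y Z u c)) (s : Fin 3) :
    (weight (swap F s) : ℤ) = weight (swap (baseCols Y Z u) s) +
      (#{c ∈ Y | F c = oycol u} * defect (oycol u) (ycol u) s +
        #{c ∈ Y | F c = aacol u} * defect (aacol u) (ycol u) s +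
        #{c ∈ Z | F c = ozcol u} * defect (ozcol u) (zcol u) s +
        #{c ∈ Z | F c = abcol u} * defect (abcol u) (zcol u) s) := by
  have hYne := ycol_oycol_aacol_ne u
  have hZne := zcol_ozcol_abcol_ne u
  have hdefect (c : Fin e) : defect (F c) (baseCols Y Z u c) s =
      (if c ∈ {c ∈ Y | F c = oycol u} then defect (oycol u) (ycol u) s else 0) +
      (if c ∈ {c ∈ Y | F c = aacol u} then defect (aacol u) (ycol u) s else 0) +
      (if c ∈ {c ∈ Z | F c = ozcol u} then defect (ozcol u) (zcol u) s else 0) +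
      (if c ∈ {c ∈ Z | F c = abcol u} then defect (abcol u) (zcol u) s else 0) := by
    have hcYZ : c ∈ Y → c ∉ Z := fun h => disjoint_left.1 hYZ h
    rcases eq_baseCols_or_of_weight_eq hYZ hcol c with h | ⟨hc, h⟩ | ⟨hc, h⟩ | ⟨hc, h⟩ | ⟨hc, h⟩ <;>
      by_cases hcY : c ∈ Y <;> by_cases hcZ : c ∈ Z <;> simp_all [baseCols, defect, eq_comm]
  have hdiff : (weight (swap F s) : ℤ) - weight (swap (baseCols Y Z u) s) =
      ∑ c, defect (F c) (baseCols Y Z u c) s := by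
    simp [weight, defect, swap, sum_sub_distrib]
  simp only [hdefect, sum_add_distrib, sum_ite_mem, univ_inter, sum_const, nsmul_eq_mul] at hdiff
  linarith

theorem mem_DCols_of_weight_eq (hYZ : Disjoint Y Z) {F : Fin e → Fin 3 → Bool}
    (hcol : ∀ c, weight (F c) = weight (baseCols Y Z u c))
    (hrow : ∀ s, (weight (swap F s) : ℤ) =
      weight (swap (baseCols Y Z u) s) + defect (aacol u) (ycol u) s) :
    F ∈ DCols Y Z u := by
  set A := {c ∈ Y | F c = oycol u}
  set B := {c ∈ Y | F c = aacol u}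
  set C := {c ∈ Z | F c = ozcol u}
  set D := {c ∈ Z | F c = abcol u}
  have hbase (c : Fin e) (hA : c ∉ A) (hB : c ∉ B) (hC : c ∉ C) (hD : c ∉ D) :
      F c = baseCols Y Z u c := by
    rcases eq_baseCols_or_of_weight_eq hYZ hcol c with h | ⟨hc, h⟩ | ⟨hc, h⟩ | ⟨hc, h⟩ | ⟨hc, h⟩ <;>
      simp_all [A, B, C, D]
  have hcount := defect_count u #A #B #C #D fun s => by
    linarith [hrow s, weight_swap_eq_of_weight_eq hYZ hcol s]
  rcases hcount with ⟨hA, hB, hC, hD⟩ | ⟨hA, hB, hC, hD⟩ | ⟨hA, hB, hC, hD⟩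
  · obtain ⟨w, hw⟩ := card_eq_one.1 hB
    have hwB : w ∈ B := hw ▸ mem_singleton_self w
    simp only [B, mem_filter] at hwB
    refine Or.inl ⟨w, hwB.1, eq_update_iff.2 ⟨hwB.2, fun c hc => hbase c ?_ ?_ ?_ ?_⟩⟩ <;>
      simp_all
  · obtain ⟨w, hw⟩ := card_eq_one.1 hD
    have hwD : w ∈ D := hw ▸ mem_singleton_self w
    simp only [D, mem_filter] at hwD
    refine Or.inr (Or.inl ⟨w, hwD.1, eq_update_iff.2 ⟨hwD.2, fun c hc => hbase c ?_ ?_ ?_ ?_⟩⟩) <;>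
      simp_all
  · obtain ⟨w, hw⟩ := card_eq_one.1 hA
    obtain ⟨w', hw'⟩ := card_eq_one.1 hC
    have hwA : w ∈ A := hw ▸ mem_singleton_self w
    have hwC : w' ∈ C := hw' ▸ mem_singleton_self w'
    simp only [A, C, mem_filter] at hwA hwC
    refine Or.inr (Or.inr ⟨w, hwA.1, w', hwC.1, eq_update_iff.2 ⟨hwC.2, fun c hc => ?_⟩⟩)
    rw [update_apply]
    split_ifs with hcw
    · exact hcw ▸ hwA.2
    · refine hbase c ?_ ?_ ?_ ?_ <;> simp_all

end Characterization

section Connectivity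

variable {e : ℕ} {Y Z : Finset (Fin e)} {u : Fin 6}

theorem beadSwap_alphaCols_gammaCols (hYZ : Disjoint Y Z) {w w' : Fin e} (hw : w ∈ Y)
    (hw' : w' ∈ Z) : BeadSwap (swap (alphaCols Y Z u w)) (swap (gammaCols Y Z u w w')) := by
  have hne : w ≠ w' := hYZ.forall_ne_finset hw hw'
  rw [gammaCols, ← update_idem (aacol u) (oycol u) (baseCols Y Z u), ← alphaCols]
  apply beadSwap_swap_update hne
  rw [alphaCols, update_self, update_of_ne hne.symm, baseCols_of_mem_right hYZ hw']
  exact isColumnSwap_aacol_zcol u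

theorem beadSwap_betaCols_gammaCols (hYZ : Disjoint Y Z) {w w' : Fin e} (hw : w ∈ Y)
    (hw' : w' ∈ Z) : BeadSwap (swap (betaCols Y Z u w')) (swap (gammaCols Y Z u w w')) := by
  have hne : w ≠ w' := hYZ.forall_ne_finset hw hw'
  rw [gammaCols, ← update_idem (abcol u) (ozcol u) (update (baseCols Y Z u) w (oycol u)),
    update_comm hne, ← betaCols]
  apply beadSwap_swap_update hne
  rw [betaCols, update_self, update_of_ne hne, baseCols_of_mem_left hw]
  exact isColumnSwap_ycol_abcol u

theorem beadSwap_gammaCols_left (hYZ : Disjoint Y Z) {w₁ w₂ w' : Fin e} (hw₁ : w₁ ∈ Y)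
    (hw₂ : w₂ ∈ Y) (hw' : w' ∈ Z) (hne : w₁ ≠ w₂) :
    BeadSwap (swap (gammaCols Y Z u w₁ w')) (swap (gammaCols Y Z u w₂ w')) := by
  have hne₁ : w₁ ≠ w' := hYZ.forall_ne_finset hw₁ hw'
  have hne₂ : w₂ ≠ w' := hYZ.forall_ne_finset hw₂ hw'
  have hG : gammaCols Y Z u w₂ w' =
      update (update (gammaCols Y Z u w₁ w') w₁ (ycol u)) w₂ (oycol u) := by
    funext c
    simp only [gammaCols, update_apply]
    split_ifs <;> simp_all [baseCols_of_mem_left]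
  rw [hG]
  apply beadSwap_swap_update hne
  simp only [gammaCols, update_self, update_of_ne hne₁, update_of_ne hne₂, update_of_ne hne.symm,
    baseCols_of_mem_left hw₂]
  exact isColumnSwap_oycol_ycol u

theorem beadSwap_gammaCols_right (hYZ : Disjoint Y Z) {w w₁' w₂' : Fin e} (hw : w ∈ Y)
    (hw₁' : w₁' ∈ Z) (hw₂' : w₂' ∈ Z) (hne : w₁' ≠ w₂') :
    BeadSwap (swap (gammaCols Y Z u w w₁')) (swap (gammaCols Y Z u w w₂')) := by
  have hne₁ : w ≠ w₁' := hYZ.forall_ne_finset hw hw₁'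
  have hne₂ : w ≠ w₂' := hYZ.forall_ne_finset hw hw₂'
  have hG : gammaCols Y Z u w w₂' =
      update (update (gammaCols Y Z u w w₁') w₁' (zcol u)) w₂' (ozcol u) := by
    funext c
    simp only [gammaCols, update_apply]
    split_ifs <;> simp_all [baseCols_of_mem_right hYZ]
  rw [hG]
  apply beadSwap_swap_update hne
  simp only [gammaCols, update_self, update_of_ne hne₂.symm,
    update_of_ne hne.symm, baseCols_of_mem_right hYZ hw₂']
  exact isColumnSwap_ozcol_zcol u

theorem eqvGen_gammaCols (hYZ : Disjoint Y Z) {w₁ w₂ w₁' w₂' : Fin e} (hw₁ : w₁ ∈ Y)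
    (hw₂ : w₂ ∈ Y) (hw₁' : w₁' ∈ Z) (hw₂' : w₂' ∈ Z) :
    Relation.EqvGen BeadSwap (swap (gammaCols Y Z u w₁ w₁')) (swap (gammaCols Y Z u w₂ w₂')) := by
  have hleft : Relation.EqvGen BeadSwap (swap (gammaCols Y Z u w₁ w₁'))
      (swap (gammaCols Y Z u w₂ w₁')) := by
    rcases eq_or_ne w₁ w₂ with rfl | hne
    · exact .refl _
    · exact .rel _ _ (beadSwap_gammaCols_left hYZ hw₁ hw₂ hw₁' hne)
  have hright : Relation.EqvGen BeadSwap (swap (gammaCols Y Z u w₂ w₁'))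
      (swap (gammaCols Y Z u w₂ w₂')) := by
    rcases eq_or_ne w₁' w₂' with rfl | hne
    · exact .refl _
    · exact .rel _ _ (beadSwap_gammaCols_right hYZ hw₂ hw₁' hw₂' hne)
  exact .trans _ _ _ hleft hright

theorem exists_eqvGen_gammaCols (hYZ : Disjoint Y Z) (hY : Y.Nonempty) (hZ : Z.Nonempty)
    {F : Fin e → Fin 3 → Bool} (hF : F ∈ DCols Y Z u) :
    ∃ w ∈ Y, ∃ w' ∈ Z, Relation.EqvGen BeadSwap (swap F) (swap (gammaCols Y Z u w w')) := by
  rcases hF with ⟨w, hw, rfl⟩ | ⟨w', hw', rfl⟩ | ⟨w, hw, w', hw', rfl⟩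
  · obtain ⟨w', hw'⟩ := hZ
    exact ⟨w, hw, w', hw', .rel _ _ (beadSwap_alphaCols_gammaCols hYZ hw hw')⟩
  · obtain ⟨w, hw⟩ := hY
    exact ⟨w, hw, w', hw', .rel _ _ (beadSwap_betaCols_gammaCols hYZ hw hw')⟩
  · exact ⟨w, hw, w', hw', .refl _⟩

theorem eqvGen_of_mem_DCols (hYZ : Disjoint Y Z) (hY : Y.Nonempty) (hZ : Z.Nonempty)
    {F G : Fin e → Fin 3 → Bool} (hF : F ∈ DCols Y Z u) (hG : G ∈ DCols Y Z u) :
    Relation.EqvGen BeadSwap (swap F) (swap G) := by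
  obtain ⟨w₁, hw₁, w₁', hw₁', hF⟩ := exists_eqvGen_gammaCols hYZ hY hZ hF
  obtain ⟨w₂, hw₂, w₂', hw₂', hG⟩ := exists_eqvGen_gammaCols hYZ hY hZ hG
  exact .trans _ _ _ hF (.trans _ _ _ (eqvGen_gammaCols hYZ hw₁ hw₂ hw₁' hw₂') (.symm _ _ hG))

end Connectivity

theorem Duset_eq_beadSwap_class_general (e : ℕ)
    (Y Z : Finset (Fin e)) {y z : ℕ} (hY : Y.card = y + 1) (hZ : Z.card = z + 1)
    (hYZ : Disjoint Y Z)
    (u : Fin 6) (M : Fin 3 → Fin e → Bool) (hM : M ∈ Duset Y Z hY hZ u) :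
    {L : Fin 3 → Fin e → Bool | Relation.EqvGen BeadSwap L M} = Duset Y Z hY hZ u := by
  ext L
  rw [Set.mem_ofPred_eq, mem_Duset_iff hYZ]
  rw [mem_Duset_iff hYZ] at hM
  constructor
  · intro hLM
    refine mem_DCols_of_weight_eq hYZ (fun c => ?_) (fun s => ?_)
    · exact (weight_col_eq_of_eqvGen hLM c).trans (weight_of_mem_DCols hYZ hM c)
    · rw [← weight_swap_of_mem_DCols hYZ hM s]
      exact congrArg Nat.cast (weight_row_eq_of_eqvGen hLM s)
  · exact fun hL => eqvGen_of_mem_DCols hYZ (Finset.card_pos.1 (by omega))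
      (Finset.card_pos.1 (by omega)) hL hM

/-- `D^u` is a single bead-swap equivalence class. -/
theorem Duset_eq_beadSwap_class (e : ℕ) (he : 2 ≤ e)
    (X Y Z : Finset (Fin e)) {y z : ℕ} (hY : Y.card = y + 1) (hZ : Z.card = z + 1)
    (hXY : Disjoint X Y) (hXZ : Disjoint X Z) (hYZ : Disjoint Y Z)
    (hcover : X ∪ Y ∪ Z = Finset.univ)
    (u : Fin 6) (M : Fin 3 → Fin e → Bool) (hM : M ∈ Duset Y Z hY hZ u) :
    {L : Fin 3 → Fin e → Bool | Relation.EqvGen BeadSwap L M} = Duset Y Z hY hZ u :=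
  Duset_eq_beadSwap_class_general e Y Z hY hZ hYZ u M hM

end
end AK
end

section
/- Let e ≥ 2, r = 3, let B be a base tuple, and let L, M ∈ M̌(3,e) with L ∼ M, wt(L) = 2, and L indecomposable (for every partition of {1,2,3} into nonempty sets S, T there exist s ∈ S, t ∈ T with wt^L(s,t) ≥ 1). Set μ = Pt(B,L) and λ = Pt(B,M). Then μ ⤳ λ if and only if there exist columns i < j and k ∈ {1,2} such that L(k,j) = L(k+1,i) = M(k,i) = M(k+1,j) = 1, L(k,i) = L(k+1,j) = M(k,j) = M(k+1,i) = 0, and L(k′,i′) = M(k′,i′) whenever k′ ∉ {k, k+1} or i′ ∉ {i, j}. -/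
open scoped Classical

namespace AK
noncomputable section



/-! ### Moving rim hooks between consecutive components (r = 3) -/

/-- `T'` is obtained from the β-set `T` by removing a rim hook of length `h`,
using the bead `β`. -/
def HookRemove (T T' : Set ℤ) (h : ℕ) (β : ℤ) : Prop :=
  β ∈ T ∧ (β - (h : ℤ)) ∉ T ∧ T' = (T \ {β}) ∪ {β - (h : ℤ)}

/-- `Pt(B,M)` is obtained from `Pt(B,L)` by removing a rim hook of length `h`
from component `k` (using bead `β`) and adding a rim hook of the same length
to component `k+1` (using bead `β'`). -/
def LeadsToWith {e : ℕ} (B : Fin e → ℕ) (L M : Fin 3 → Fin e → Bool)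
    (k : Fin 2) (h : ℕ) (β β' : ℤ) : Prop :=
  1 ≤ h ∧
  HookRemove (Tset B L k.castSucc) (Tset B M k.castSucc) h β ∧
  HookRemove (Tset B M k.succ) (Tset B L k.succ) h β' ∧
  (∀ s : Fin 3, s ≠ k.castSucc → s ≠ k.succ → Tset B L s = Tset B M s)

/-- `Pt(B,L) ⤳ Pt(B,M)`. -/
def LeadsTo {e : ℕ} (B : Fin e → ℕ) (L M : Fin 3 → Fin e → Bool) : Prop :=
  ∃ k h β β', LeadsToWith B L M k h β β'

/-- `Pt(B,L) ≈ Pt(B,M)`: as `⤳`, with the two rim hooks of equal leg lengths. -/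
def RelEq {e : ℕ} (B : Fin e → ℕ) (L M : Fin 3 → Fin e → Bool) : Prop :=
  ∃ k h β β', LeadsToWith B L M k h β β' ∧
    Set.ncard {w : ℤ | w ∈ Tset B L k.castSucc ∧ β - (h : ℤ) < w ∧ w < β}
      = Set.ncard {w : ℤ | w ∈ Tset B M k.succ ∧ β' - (h : ℤ) < w ∧ w < β'}

/-! In the abacus of `Pt(B, M)`, row `s` of `M` only decides, for each runner `p`, whether the
position `p + e·B p` (the slot of `p`) carries a bead; all other positions of the β-set are the
same for every row. A rim hook removal between two such β-sets therefore moves one bead from a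
slot to a lower slot, i.e. swaps a `1` and a `0` of the row. Bead swaps preserve column sums, so
the bead leaving row `k` in column `j` must enter row `k + 1` in column `j`; hence both hooks use
the same two slots, which is the matrix condition. -/

section Abacus

variable {e r : ℕ} (B : Fin e → ℕ)

def slot (p : Fin e) : ℤ := p + e * B p

lemma slot_emod (p : Fin e) : slot B p % e = p := by
  rw [slot, Int.add_mul_emod_self_left,
    Int.emod_eq_of_lt (by positivity) (by exact_mod_cast p.isLt)]

lemma slot_injective : Function.Injective (slot B) := fun p q h => Fin.ext <| by
  exact_mod_cast (slot_emod B p).symm.trans ((congrArg (· % (e : ℤ)) h).trans (slot_emod B q))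

lemma prec_iff_slot_lt {i j : Fin e} : prec B i j ↔ slot B i < slot B j := by
  have hi : (i : ℤ) < e := by exact_mod_cast i.isLt
  have hj : (j : ℤ) < e := by exact_mod_cast j.isLt
  simp only [prec, slot, Fin.lt_def]
  constructor
  · rintro (h | ⟨h, hij⟩)
    · have : (e : ℤ) * (B i + 1) ≤ e * B j := by gcongr; exact_mod_cast h
      linarith [Int.natCast_nonneg (j : ℕ)]
    · rw [h]; exact_mod_cast Nat.add_lt_add_right hij _
  · intro h
    rcases lt_trichotomy (B i) (B j) with hb | hb | hb
    · exact Or.inl hb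
    · refine Or.inr ⟨hb, ?_⟩
      rw [hb] at h; exact_mod_cast lt_of_add_lt_add_right h
    · have : (e : ℤ) * (B j + 1) ≤ e * B i := by gcongr; exact_mod_cast hb
      linarith [Int.natCast_nonneg (i : ℕ)]

lemma rank_val (i : Fin e) :
    (rank B i : ℕ) = (Finset.univ.filter fun j => slot B j < slot B i).card := by
  simp only [rank, prec_iff_slot_lt]

lemma rank_lt_rank_iff {i j : Fin e} : rank B i < rank B j ↔ slot B i < slot B j := by
  rw [Fin.lt_def, rank_val, rank_val]
  constructor
  · intro h
    by_contra! hji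
    refine h.not_ge (Finset.card_le_card fun x hx => ?_)
    simp only [Finset.mem_filter, Finset.mem_univ, true_and] at hx ⊢
    exact hx.trans_le hji
  · intro h
    refine Finset.card_lt_card ⟨fun x hx => ?_, fun hsub => ?_⟩
    · simp only [Finset.mem_filter, Finset.mem_univ, true_and] at hx ⊢
      exact hx.trans h
    · exact lt_irrefl _ (Finset.mem_filter.1 (hsub (Finset.mem_filter.2 ⟨Finset.mem_univ _, h⟩))).2

lemma rank_injective : Function.Injective (rank B) := by
  intro i j h
  apply slot_injective B
  by_contra hne
  rcases lt_or_gt_of_ne hne with hlt | hlt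
  · exact ((rank_lt_rank_iff B).2 hlt).ne h
  · exact ((rank_lt_rank_iff B).2 hlt).ne' h

lemma rank_surjective : Function.Surjective (rank B) :=
  Finite.surjective_of_injective (rank_injective B)

end Abacus

section BetaSet

variable {e r : ℕ} (B : Fin e → ℕ)

lemma lt_beads_iff_of_ne {M : Fin r → Fin e → Bool} {s : Fin r} {p : Fin e} {m : ℕ}
    (h : m ≠ B p) : m < beads B M s p ↔ m < B p := by
  unfold beads; split <;> omega

lemma mem_Tset_congr {L M : Fin r → Fin e → Bool} {s t : Fin r} {z : ℤ}
    (hz : z ∉ Set.range (slot B)) : z ∈ Tset B L s ↔ z ∈ Tset B M t := by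
  simp only [Tset, Set.mem_ofPred_eq]
  refine or_congr_right (and_congr_right fun hz0 => exists_congr fun hlt => ?_)
  have hm : z.toNat / e ≠ B ⟨z.toNat % e, hlt⟩ := fun hm => hz ⟨⟨z.toNat % e, hlt⟩, by
    have hdecomp : ((z.toNat % e : ℕ) : ℤ) + e * ((z.toNat / e : ℕ) : ℤ) = (z.toNat : ℤ) := by
      exact_mod_cast Nat.mod_add_div z.toNat e
    rw [Int.toNat_of_nonneg hz0, hm] at hdecomp
    exact hdecomp⟩
  rw [lt_beads_iff_of_ne B hm, lt_beads_iff_of_ne B hm]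

lemma slot_mem_Tset {M : Fin r → Fin e → Bool} {s : Fin r} {p : Fin e} :
    slot B p ∈ Tset B M s ↔ M s (rank B p) = true := by
  have htoNat : (slot B p).toNat = p + e * B p := by rw [slot]; exact_mod_cast Int.toNat_natCast _
  have hmod : (p + e * B p) % e = p := by rw [Nat.add_mul_mod_self_left, Nat.mod_eq_of_lt p.isLt]
  have hdiv : (p + e * B p) / e = B p := by
    rw [Nat.add_mul_div_left _ _ p.pos, Nat.div_eq_of_lt p.isLt, zero_add]
  have hslot : 0 ≤ slot B p := by rw [slot]; positivity
  simp only [Tset, Set.mem_ofPred_eq, hslot.not_gt, false_or, true_and, htoNat, hmod, hdiv, beads,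
    hslot, p.isLt, exists_true_left, Nat.lt_add_right_iff_pos]
  split <;> simp_all

lemma Tset_eq_Tset_iff {L M : Fin r → Fin e → Bool} {s t : Fin r} :
    Tset B L s = Tset B M t ↔ L s = M t := by
  constructor
  · intro h
    funext i
    obtain ⟨p, rfl⟩ := rank_surjective B i
    rw [Bool.eq_iff_iff, ← slot_mem_Tset, ← slot_mem_Tset, h]
  · intro h
    simp only [Tset, beads, h]

end BetaSet

section HookRemoval

variable {e r : ℕ} (B : Fin e → ℕ)

def MovesBead (x y : Fin e → Bool) (a b : Fin e) : Prop :=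
  x a = true ∧ x b = false ∧ y a = false ∧ y b = true ∧ ∀ c, c ≠ a → c ≠ b → x c = y c

theorem hookRemove_Tset_iff {L M : Fin r → Fin e → Bool} {s t : Fin r} {h : ℕ} {β : ℤ} :
    HookRemove (Tset B L s) (Tset B M t) h β ↔
      ∃ p q, β = slot B p ∧ β - h = slot B q ∧ MovesBead (L s) (M t) (rank B p) (rank B q) := by
  constructor
  · rintro ⟨hβL, hβhL, hT⟩
    have hne : β ≠ β - h := fun heq => hβhL (heq ▸ hβL)
    have hβM : β ∉ Tset B M t := by rw [hT]; simp [hne]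
    have hβhM : β - h ∈ Tset B M t := by rw [hT]; simp
    obtain ⟨p, rfl⟩ : β ∈ Set.range (slot B) := by
      by_contra hc; exact hβM ((mem_Tset_congr B hc).1 hβL)
    obtain ⟨q, hq⟩ : slot B p - h ∈ Set.range (slot B) := by
      by_contra hc; exact hβhL ((mem_Tset_congr B hc).2 hβhM)
    rw [← hq, slot_mem_Tset] at hβhL hβhM
    rw [slot_mem_Tset] at hβL hβM
    refine ⟨p, q, rfl, hq.symm, hβL, by simpa using hβhL, by simpa using hβM, hβhM, ?_⟩
    intro c hcp hcq
    obtain ⟨w, rfl⟩ := rank_surjective B c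
    have hmem := congrArg (slot B w ∈ ·) hT
    simp only [← hq, Set.mem_union, Set.mem_sdiff, Set.mem_singleton_iff,
      (slot_injective B).eq_iff, slot_mem_Tset, eq_iff_iff] at hmem
    rw [Bool.eq_iff_iff, hmem]
    have hwp : w ≠ p := fun h => hcp (h ▸ rfl)
    have hwq : w ≠ q := fun h => hcq (h ▸ rfl)
    simp [hwp, hwq]
  · rintro ⟨p, q, rfl, hq, hLp, hLq, hMp, hMq, hrest⟩
    have hpq : p ≠ q := by rintro rfl; simp [hLp] at hLq
    refine ⟨(slot_mem_Tset B).2 hLp, by rw [hq, slot_mem_Tset, hLq]; simp, ?_⟩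
    ext z
    rw [hq]
    by_cases hz : z ∈ Set.range (slot B)
    · obtain ⟨w, rfl⟩ := hz
      simp only [Set.mem_union, Set.mem_sdiff, Set.mem_singleton_iff, (slot_injective B).eq_iff,
        slot_mem_Tset]
      by_cases hwp : w = p
      · subst hwp; simp [hMp, hpq]
      by_cases hwq : w = q
      · subst hwq; simp [hMq]
      rw [hrest _ ((rank_injective B).ne hwp) ((rank_injective B).ne hwq)]
      simp [hwp, hwq]
    · have hzp : z ≠ slot B p := fun h => hz ⟨p, h.symm⟩
      have hzq : z ≠ slot B q := fun h => hz ⟨q, h.symm⟩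
      simp only [Set.mem_union, Set.mem_sdiff, Set.mem_singleton_iff, hzp, hzq, not_false_eq_true,
        and_true, or_false]
      exact mem_Tset_congr B hz

end HookRemoval

section ColumnSums

variable {e r : ℕ}

lemma sum_eq_sum_iff_add_eq_add {α β : Type*} [Fintype α] [DecidableEq α] [AddCancelCommMonoid β]
    {f g : α → β} {s t : α} (hst : s ≠ t) (hoff : ∀ x, x ≠ s → x ≠ t → f x = g x) :
    ∑ x, f x = ∑ x, g x ↔ f s + f t = g s + g t := by
  have hcompl : ∑ x ∈ {s, t}ᶜ, f x = ∑ x ∈ {s, t}ᶜ, g x :=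
    Finset.sum_congr rfl fun x hx => by
      simp only [Finset.mem_compl, Finset.mem_insert, Finset.mem_singleton, not_or] at hx
      exact hoff x hx.1 hx.2
  rw [← Finset.sum_add_sum_compl {s, t} f, ← Finset.sum_add_sum_compl {s, t} g,
    Finset.sum_pair hst, Finset.sum_pair hst, hcompl, add_left_inj]

def colSum (M : Fin r → Fin e → Bool) (i : Fin e) : ℕ := ∑ s, (M s i).toNat

lemma colSum_eq_of_beadSwap {L M : Fin r → Fin e → Bool} (h : BeadSwap L M) :
    colSum L = colSum M := by
  obtain ⟨i, j, -, s, t, hst, hLsi, hLtj, hLsj, hLti, hMsi, hMtj, hMsj, hMti, hrest⟩ := h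
  funext c
  refine (sum_eq_sum_iff_add_eq_add hst fun x hxs hxt => ?_).2 ?_
  · rw [hrest x c (Or.inl ⟨hxs, hxt⟩)]
  by_cases hci : c = i
  · subst hci; simp [hLsi, hLti, hMsi, hMti]
  by_cases hcj : c = j
  · subst hcj; simp [hLsj, hLtj, hMsj, hMtj]
  rw [hrest s c (Or.inr ⟨hci, hcj⟩), hrest t c (Or.inr ⟨hci, hcj⟩)]

lemma colSum_eq_of_eqvGen {L M : Fin r → Fin e → Bool} (h : Relation.EqvGen BeadSwap L M) :
    colSum L = colSum M :=
  (Equivalence.eqvGen_iff (InvImage.equivalence _ colSum eq_equivalence)).1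
    (h.mono fun _ _ => colSum_eq_of_beadSwap)

lemma eq_false_and_eq_true_of_colSum_eq {L M : Fin r → Fin e → Bool} {s t : Fin r} {a : Fin e}
    (hcol : colSum L a = colSum M a) (hst : s ≠ t)
    (hoff : ∀ x, x ≠ s → x ≠ t → L x a = M x a) (hL : L s a = true) (hM : M s a = false) :
    L t a = false ∧ M t a = true := by
  rw [colSum, colSum, sum_eq_sum_iff_add_eq_add hst fun x hxs hxt => by rw [hoff x hxs hxt],
    hL, hM] at hcol
  cases hLt : L t a <;> cases hMt : M t a <;> simp_all

end ColumnSums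

section LeadsTo

variable {e : ℕ} (B : Fin e → ℕ)

theorem leadsTo_iff_of_colSum_eq {L M : Fin 3 → Fin e → Bool} (hcol : colSum L = colSum M) :
    LeadsTo B L M ↔ ∃ i j : Fin e, i < j ∧ ∃ k : Fin 2,
      MovesBead (L k.castSucc) (M k.castSucc) j i ∧ MovesBead (M k.succ) (L k.succ) j i ∧
      ∀ s, s ≠ k.castSucc → s ≠ k.succ → L s = M s := by
  constructor
  · rintro ⟨k, h, β, β', hh, hL, hM, hrest⟩
    rw [hookRemove_Tset_iff] at hL hM
    obtain ⟨p, q, rfl, hq, hLk⟩ := hL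
    obtain ⟨p', q', rfl, hq', hMk⟩ := hM
    have hrows (s : Fin 3) (h1 : s ≠ k.castSucc) (h2 : s ≠ k.succ) : L s = M s :=
      (Tset_eq_Tset_iff B).1 (hrest s h1 h2)
    have hp : L k.succ (rank B p) = false ∧ M k.succ (rank B p) = true :=
      eq_false_and_eq_true_of_colSum_eq (congrFun hcol _) Fin.castSucc_lt_succ.ne
        (fun x h1 h2 => congrFun (hrows x h1 h2) _) hLk.1 hLk.2.2.1
    obtain rfl : p = p' := by
      by_contra hne
      have hpq' : rank B p ≠ rank B q' := fun h => by simp [h, hMk.2.1] at hp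
      simpa [hp.1, hp.2] using hMk.2.2.2.2 _ ((rank_injective B).ne hne) hpq'
    obtain rfl : q = q' := slot_injective B (hq.symm.trans hq')
    exact ⟨rank B q, rank B p, (rank_lt_rank_iff B).2 (by omega), k, hLk, hMk, hrows⟩
  · rintro ⟨i, j, hij, k, hLk, hMk, hrows⟩
    obtain ⟨u, rfl⟩ := rank_surjective B i
    obtain ⟨v, rfl⟩ := rank_surjective B j
    have hlt := (rank_lt_rank_iff B).1 hij
    have hsub : slot B v - ((slot B v - slot B u).toNat : ℤ) = slot B u := by
      rw [Int.toNat_of_nonneg (by omega)]; ring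
    exact ⟨k, (slot B v - slot B u).toNat, slot B v, slot B v, by omega,
      (hookRemove_Tset_iff B).2 ⟨v, u, rfl, hsub, hLk⟩,
      (hookRemove_Tset_iff B).2 ⟨v, u, rfl, hsub, hMk⟩,
      fun s h1 h2 => (Tset_eq_Tset_iff B).2 (hrows s h1 h2)⟩

lemma movesBead_rows_iff {L M : Fin 3 → Fin e → Bool} {k : Fin 2} {i j : Fin e} :
    (MovesBead (L k.castSucc) (M k.castSucc) j i ∧ MovesBead (M k.succ) (L k.succ) j i ∧
      ∀ s, s ≠ k.castSucc → s ≠ k.succ → L s = M s) ↔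
    (L k.castSucc j = true ∧ L k.succ i = true ∧ M k.castSucc i = true ∧ M k.succ j = true ∧
      L k.castSucc i = false ∧ L k.succ j = false ∧ M k.castSucc j = false ∧ M k.succ i = false ∧
      ∀ (k' : Fin 3) (i' : Fin e),
        (k' ≠ k.castSucc ∧ k' ≠ k.succ) ∨ (i' ≠ i ∧ i' ≠ j) → L k' i' = M k' i') := by
  constructor
  · rintro ⟨⟨hL1, hL2, hM1, hM2, hLM⟩, ⟨hM3, hM4, hL3, hL4, hML⟩, hrows⟩
    refine ⟨hL1, hL4, hM2, hM3, hL2, hL3, hM1, hM4, ?_⟩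
    rintro k' i' (⟨hk1, hk2⟩ | ⟨hi, hj⟩)
    · exact congrFun (hrows k' hk1 hk2) i'
    by_cases hk1 : k' = k.castSucc
    · subst hk1; exact hLM i' hj hi
    by_cases hk2 : k' = k.succ
    · subst hk2; exact (hML i' hj hi).symm
    exact congrFun (hrows k' hk1 hk2) i'
  · rintro ⟨hL1, hL4, hM2, hM3, hL2, hL3, hM1, hM4, hrest⟩
    exact ⟨⟨hL1, hL2, hM1, hM2, fun c hj hi => hrest _ c (Or.inr ⟨hi, hj⟩)⟩,
      ⟨hM3, hM4, hL3, hL4, fun c hj hi => (hrest _ c (Or.inr ⟨hi, hj⟩)).symm⟩,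
      fun s h1 h2 => funext fun c => hrest s c (Or.inl ⟨h1, h2⟩)⟩

end LeadsTo

theorem leadsTo_matrix_characterisation_general (e : ℕ)
    (B : Fin e → ℕ)
    (L M : Fin 3 → Fin e → Bool)
    (hequiv : Relation.EqvGen BeadSwap L M) :
    LeadsTo B L M ↔
      ∃ i j : Fin e, i < j ∧ ∃ k : Fin 2,
        L k.castSucc j = true ∧ L k.succ i = true ∧
        M k.castSucc i = true ∧ M k.succ j = true ∧
        L k.castSucc i = false ∧ L k.succ j = false ∧
        M k.castSucc j = false ∧ M k.succ i = false ∧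
        (∀ (k' : Fin 3) (i' : Fin e),
          (k' ≠ k.castSucc ∧ k' ≠ k.succ) ∨ (i' ≠ i ∧ i' ≠ j) →
            L k' i' = M k' i') := by
  simp only [leadsTo_iff_of_colSum_eq B (colSum_eq_of_eqvGen hequiv), movesBead_rows_iff]

/-- Matrix characterisation of `Pt(B,L) ⤳ Pt(B,M)` in an
indecomposable core block of weight 2 with `r = 3`. -/
theorem leadsTo_matrix_characterisation (e : ℕ) (he : 2 ≤ e)
    (B : Fin e → ℕ) (hB : ∃ i, B i = 0)
    (L M : Fin 3 → Fin e → Bool)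
    (hLcheck : ∀ i : Fin e, ∃ s : Fin 3, L s i = false)
    (hMcheck : ∀ i : Fin e, ∃ s : Fin 3, M s i = false)
    (hequiv : Relation.EqvGen BeadSwap L M)
    (hwt : wtM L = 2)
    (hind : ∀ S T : Finset (Fin 3), S.Nonempty → T.Nonempty → Disjoint S T →
      S ∪ T = Finset.univ → ∃ s ∈ S, ∃ t ∈ T, 1 ≤ wtPair L s t) :
    LeadsTo B L M ↔
      ∃ i j : Fin e, i < j ∧ ∃ k : Fin 2,
        L k.castSucc j = true ∧ L k.succ i = true ∧
        M k.castSucc i = true ∧ M k.succ j = true ∧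
        L k.castSucc i = false ∧ L k.succ j = false ∧
        M k.castSucc j = false ∧ M k.succ i = false ∧
        (∀ (k' : Fin 3) (i' : Fin e),
          (k' ≠ k.castSucc ∧ k' ≠ k.succ) ∨ (i' ≠ i ∧ i' ≠ j) →
            L k' i' = M k' i') :=
  leadsTo_matrix_characterisation_general e B L M hequiv

end
end AK
end
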